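/- Let i ≤ j ≤ k be positive integers and let ρ be an i-polymatroid on a finite set E that is an excluded minor for the class D_k of k-decomposable polymatroids. Then the j-dual of ρ, given by X ↦ j·|X| − ρ(E) + ρ(E−X), is also an excluded minor for D_k, and so is the j-polymatroid ρ^j given by ρ^j(X) = ρ(X) + (j−i)·|X|. -/

import Mathlib

variable {α : Type*}

/-- `ρ` is an (integer) polymatroid on ground set `E`. -/
def IsPolymatroidOn [DecidableEq α] (E : Finset α) (ρ : Finset α → ℤ) : Prop :=
  ρ ∅ = 0 ∧
  (∀ A B : Finset α, A ⊆ B → B ⊆ E → ρ A ≤ ρ B) ∧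
  (∀ A B : Finset α, A ⊆ E → B ⊆ E → ρ (A ∪ B) + ρ (A ∩ B) ≤ ρ A + ρ B)

/-- `r` is the rank function of a matroid on `E` (matroids are exactly the
`1`-polymatroids). -/
def IsMatroidRankOn [DecidableEq α] (E : Finset α) (r : Finset α → ℤ) : Prop :=
  IsPolymatroidOn E r ∧ ∀ e ∈ E, r {e} ≤ 1

/-- `ρ` is a sum of `k` matroid rank functions on `E`. -/
def KDecomposable [DecidableEq α] (k : ℕ) (E : Finset α) (ρ : Finset α → ℤ) : Prop :=
  ∃ M : Fin k → Finset α → ℤ,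
    (∀ i, IsMatroidRankOn E (M i)) ∧ ∀ X ⊆ E, ρ X = ∑ i, M i X

/-- `ρ` (on ground set `E`) is an excluded minor for the class `D_k` of
`k`-decomposable polymatroids: `ρ ∉ D_k`, but every proper minor `(ρ∖A)/B`
(obtained by deleting or contracting at least one element) lies in `D_k`. -/
def ExcludedMinorDk [DecidableEq α] (k : ℕ) (E : Finset α) (ρ : Finset α → ℤ) : Prop :=
  ¬ KDecomposable k E ρ ∧
  ∀ A B : Finset α, A ⊆ E → B ⊆ E → Disjoint A B → (A ∪ B).Nonempty →
    KDecomposable k (E \ (A ∪ B)) (fun X => ρ (X ∪ B) - ρ B)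

/-!
Everything rests on one transfer principle: if `σ` is a `k`-decomposable polymatroid whose
singletons have rank at most `m ≤ k`, then its `m`-dual is `k`-decomposable. Dualising the `k`
matroids of a decomposition gives the `k`-dual, which is the `m`-dual plus `(k - m)|X|`, and a
summand `|X|` can always be peeled off a decomposition of a polymatroid: every element is then a
coloop of one of the matroids, and making it a loop there lowers the rank of each set containing
it by exactly `1`.

Minors of the `j`-dual are `j`-duals of minors (deletion and contraction swap), and
`ρ + (j - i)|X|` is the `j`-dual of the `i`-dual of `ρ`, so its minors are double duals of minors
of `ρ`. Neither polymatroid is in `D_k`, since `ρ` is its own double `j`-dual and `|X|`-summands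
can be peeled off.
-/

open Finset

section

variable [DecidableEq α] {E : Finset α} {ρ σ : Finset α → ℤ} {k : ℕ}

def polymatroidDual (m : ℤ) (E : Finset α) (ρ : Finset α → ℤ) : Finset α → ℤ :=
  fun X => m * #X - ρ E + ρ (E \ X)

def polymatroidContract (ρ : Finset α → ℤ) (B : Finset α) : Finset α → ℤ :=
  fun X => ρ (X ∪ B) - ρ B

theorem polymatroidDual_polymatroidDual (m m' : ℤ) (h0 : ρ ∅ = 0) {X : Finset α} (hX : X ⊆ E) :
    polymatroidDual m' E (polymatroidDual m E ρ) X = ρ X + (m' - m) * #X := by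
  have hcard : (#(E \ X) : ℤ) + #X = #E := by exact_mod_cast card_sdiff_add_card_eq_card hX
  simp only [polymatroidDual, sdiff_self, Finset.sdiff_sdiff_eq_self hX, bot_eq_empty, h0]
  linear_combination m * hcard

theorem polymatroidContract_polymatroidDual (m : ℤ) {A B X : Finset α} (hA : A ⊆ E)
    (hAB : Disjoint A B) (hX : X ⊆ E \ (A ∪ B)) :
    polymatroidContract (polymatroidDual m E ρ) B X =
      polymatroidDual m (E \ (A ∪ B)) (polymatroidContract ρ A) X := by
  have hXB : Disjoint X B := disjoint_sdiff_self_left.mono hX subset_union_right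
  have hrest : E \ (A ∪ B) ∪ A = E \ B := by
    ext x; grind [disjoint_left]
  have hcompl : (E \ (A ∪ B)) \ X ∪ A = E \ (X ∪ B) := by
    ext x; grind [disjoint_left]
  simp only [polymatroidContract, polymatroidDual, hrest, hcompl, card_union_of_disjoint hXB]
  push_cast
  ring

namespace IsPolymatroidOn

theorem mono (hρ : IsPolymatroidOn E ρ) {A B : Finset α} (hAB : A ⊆ B) (hB : B ⊆ E) :
    ρ A ≤ ρ B :=
  hρ.2.1 A B hAB hB

theorem submod (hρ : IsPolymatroidOn E ρ) {A B : Finset α} (hA : A ⊆ E) (hB : B ⊆ E) :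
    ρ (A ∪ B) + ρ (A ∩ B) ≤ ρ A + ρ B :=
  hρ.2.2 A B hA hB

theorem nonneg (hρ : IsPolymatroidOn E ρ) {X : Finset α} (hX : X ⊆ E) : 0 ≤ ρ X :=
  hρ.1 ▸ hρ.mono (empty_subset X) hX

theorem union_le (hρ : IsPolymatroidOn E ρ) {A B : Finset α} (hA : A ⊆ E) (hB : B ⊆ E) :
    ρ (A ∪ B) ≤ ρ A + ρ B := by
  linarith [hρ.submod hA hB, hρ.nonneg (inter_subset_left.trans hA : A ∩ B ⊆ E)]

theorem union_le_add_mul_card (hρ : IsPolymatroidOn E ρ) {m : ℤ} (hm : ∀ e ∈ E, ρ {e} ≤ m)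
    {Y Z : Finset α} (hY : Y ⊆ E) (hZ : Z ⊆ E) : ρ (Y ∪ Z) ≤ ρ Y + m * #Z := by
  induction Z using Finset.induction_on with
  | empty => simp
  | insert z Z hz ih =>
    obtain ⟨hzE, hZE⟩ := insert_subset_iff.1 hZ
    have hstep := hρ.union_le (singleton_subset_iff.2 hzE) (union_subset hY hZE)
    rw [union_insert, insert_eq, card_insert_of_notMem hz]
    push_cast
    linarith [ih hZE, hm z hzE]

theorem add_mul_card (hρ : IsPolymatroidOn E ρ) {c : ℤ} (hc : 0 ≤ c) :
    IsPolymatroidOn E (fun X => ρ X + c * #X) := by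
  refine ⟨by simp [hρ.1], fun A B hAB hB => ?_, fun A B hA hB => ?_⟩
  · have : (#A : ℤ) ≤ #B := by exact_mod_cast card_le_card hAB
    linarith [hρ.mono hAB hB, mul_le_mul_of_nonneg_left this hc]
  · have : (#(A ∪ B) : ℤ) + #(A ∩ B) = #A + #B := by exact_mod_cast card_union_add_card_inter A B
    linear_combination hρ.submod hA hB + c * this

theorem comp_filter (hρ : IsPolymatroidOn E ρ) (p : α → Prop) [DecidablePred p] :
    IsPolymatroidOn E (fun X => ρ (X.filter p)) := by
  refine ⟨by simp [hρ.1], fun A B hAB hB => ?_, fun A B hA hB => ?_⟩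
  · exact hρ.mono (filter_subset_filter p hAB) ((filter_subset p B).trans hB)
  · simp only [filter_union, filter_inter_distrib]
    exact hρ.submod ((filter_subset p A).trans hA) ((filter_subset p B).trans hB)

theorem dual (hρ : IsPolymatroidOn E ρ) {m : ℤ} (hm : ∀ e ∈ E, ρ {e} ≤ m) :
    IsPolymatroidOn E (polymatroidDual m E ρ) := by
  refine ⟨by simp [polymatroidDual], fun A B hAB hB => ?_, fun A B hA hB => ?_⟩
  · have hsplit := hρ.union_le_add_mul_card hm (sdiff_subset (t := B))
      (sdiff_subset.trans hB : B \ A ⊆ E)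
    rw [sdiff_union_sdiff_cancel hB hAB] at hsplit
    have hcard : (#(B \ A) : ℤ) + #A = #B := by exact_mod_cast card_sdiff_add_card_eq_card hAB
    simp only [polymatroidDual]
    linear_combination hsplit + m * hcard
  · have hcard : (#(A ∪ B) : ℤ) + #(A ∩ B) = #A + #B := by
      exact_mod_cast card_union_add_card_inter A B
    have hsub := hρ.submod (sdiff_subset (s := E) (t := A)) (sdiff_subset (t := B))
    simp only [polymatroidDual, sdiff_union_distrib, sdiff_inter_distrib_right]
    linear_combination hsub + m * hcard

theorem dual_singleton_le (hρ : IsPolymatroidOn E ρ) (m : ℤ) (e : α) :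
    polymatroidDual m E ρ {e} ≤ m := by
  simp only [polymatroidDual, card_singleton, Nat.cast_one]
  linarith [hρ.mono (sdiff_subset (t := {e})) subset_rfl]

theorem contract (hρ : IsPolymatroidOn E ρ) {B E' : Finset α} (hB : B ⊆ E) (hE' : E' ⊆ E) :
    IsPolymatroidOn E' (polymatroidContract ρ B) := by
  refine ⟨by simp [polymatroidContract], fun X Y hXY hY => ?_, fun X Y hX hY => ?_⟩
  · simp only [polymatroidContract]
    linarith [hρ.mono (union_subset_union_left hXY) (union_subset (hY.trans hE') hB)]
  · have hsub := hρ.submod (union_subset (hX.trans hE') hB) (union_subset (hY.trans hE') hB)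
    rw [← union_union_distrib_right, ← inter_union_distrib_right] at hsub
    simp only [polymatroidContract]
    linarith

theorem contract_singleton_le (hρ : IsPolymatroidOn E ρ) {B : Finset α} (hB : B ⊆ E) {e : α}
    (he : e ∈ E) : polymatroidContract ρ B {e} ≤ ρ {e} := by
  simp only [polymatroidContract]
  linarith [hρ.union_le (singleton_subset_iff.2 he) hB]

end IsPolymatroidOn

namespace IsMatroidRankOn

variable {r : Finset α → ℤ}

theorem dual (hr : IsMatroidRankOn E r) : IsMatroidRankOn E (polymatroidDual 1 E r) :=
  ⟨hr.1.dual hr.2, fun e _ => hr.1.dual_singleton_le 1 e⟩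

theorem comp_filter (hr : IsMatroidRankOn E r) (p : α → Prop) [DecidablePred p] :
    IsMatroidRankOn E (fun X => r (X.filter p)) := by
  refine ⟨hr.1.comp_filter p, fun e he => ?_⟩
  linarith [hr.1.mono (filter_subset p {e}) (singleton_subset_iff.2 he), hr.2 e he]

theorem eq_erase_add_one_of_lt (hr : IsMatroidRankOn E r) {X : Finset α} {e : α} (he : e ∈ X)
    (hX : X ⊆ E) (hcoloop : r (E.erase e) < r E) : r X = r (X.erase e) + 1 := by
  have hupper := hr.1.union_le (singleton_subset_iff.2 (hX he)) ((erase_subset e X).trans hX)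
  rw [← insert_eq, insert_erase he] at hupper
  have hlower := hr.1.submod hX (erase_subset e E)
  rw [inter_erase, inter_eq_left.2 hX, union_erase_of_mem he, union_eq_right.2 hX] at hlower
  linarith [hr.2 e (hX he)]

theorem eq_sdiff_add_card (hr : IsMatroidRankOn E r) {C X : Finset α} (hCX : C ⊆ X) (hX : X ⊆ E)
    (hcoloops : ∀ e ∈ C, r (E.erase e) < r E) : r X = r (X \ C) + #C := by
  induction C using Finset.induction_on generalizing X with
  | empty => simp
  | insert e C he ih =>
    obtain ⟨heX, hCX⟩ := insert_subset_iff.1 hCX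
    have hCX' : C ⊆ X.erase e := fun x hx => mem_erase.2 ⟨fun h => he (h ▸ hx), hCX hx⟩
    rw [hr.eq_erase_add_one_of_lt heX hX (hcoloops e (mem_insert_self e C)),
      ih hCX' ((erase_subset e X).trans hX) fun x hx => hcoloops x (mem_insert_of_mem hx),
      erase_sdiff_comm, ← sdiff_insert, card_insert_of_notMem he]
    push_cast
    ring

end IsMatroidRankOn

namespace KDecomposable

theorem congr (h : ∀ X ⊆ E, σ X = ρ X) (hρ : KDecomposable k E ρ) : KDecomposable k E σ := by
  obtain ⟨M, hM, hsum⟩ := hρ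
  exact ⟨M, hM, fun X hX => (h X hX).trans (hsum X hX)⟩

theorem exists_coloop (hσ : IsPolymatroidOn E σ) {M : Fin k → Finset α → ℤ}
    (hsum : ∀ X ⊆ E, σ X + #X = ∑ t, M t X) {e : α} (he : e ∈ E) :
    ∃ t, M t (E.erase e) < M t E := by
  have hcard : (#(E.erase e) : ℤ) + 1 = #E := by exact_mod_cast card_erase_add_one he
  have hlt : ∑ t, M t (E.erase e) < ∑ t, M t E := by
    rw [← hsum E subset_rfl, ← hsum _ (erase_subset e E)]
    linarith [hσ.mono (erase_subset e E) subset_rfl]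
  obtain ⟨t, -, ht⟩ := exists_lt_of_sum_lt hlt
  exact ⟨t, ht⟩

theorem sum_eq_sum_filter_add_card {M : Fin k → Finset α → ℤ} (hM : ∀ t, IsMatroidRankOn E (M t))
    {g : α → Fin k} (hg : ∀ e ∈ E, M (g e) (E.erase e) < M (g e) E) {X : Finset α} (hX : X ⊆ E) :
    ∑ t, M t X = ∑ t, M t (X.filter (g · ≠ t)) + #X := by
  have hcoloops : ∀ t, M t X = M t (X.filter (g · ≠ t)) + #(X.filter (g · = t)) := fun t => by
    rw [filter_not]
    refine (hM t).eq_sdiff_add_card (filter_subset _ X) hX fun e he => ?_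
    obtain ⟨heX, rfl⟩ := mem_filter.1 he
    exact hg e (hX heX)
  rw [Finset.sum_congr rfl fun t _ => hcoloops t, sum_add_distrib,
    card_eq_sum_card_fiberwise (f := g) (t := univ) fun e _ => mem_coe.2 (mem_univ _)]
  push_cast
  rfl

theorem of_add_card (hσ : IsPolymatroidOn E σ) (h : KDecomposable k E (fun X => σ X + #X)) :
    KDecomposable k E σ := by
  obtain ⟨M, hM, hsum⟩ := h
  have hcoloop := fun e (he : e ∈ E) => exists_coloop hσ hsum he
  rcases isEmpty_or_nonempty (Fin k) with hk | hk
  · obtain rfl : E = ∅ :=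
      eq_empty_of_forall_notMem fun e he => (hcoloop e he).elim fun t _ => hk.elim t
    exact ⟨M, hM, fun X hX => by simp [subset_empty.1 hX, hσ.1]⟩
  · choose! g hg using hcoloop
    refine ⟨fun t X => M t (X.filter (g · ≠ t)), fun t => (hM t).comp_filter _, fun X hX => ?_⟩
    linarith [hsum X hX, sum_eq_sum_filter_add_card hM hg hX]

theorem of_add_mul_card (hσ : IsPolymatroidOn E σ) {c : ℤ} (hc : 0 ≤ c)
    (h : KDecomposable k E (fun X => σ X + c * #X)) : KDecomposable k E σ := by
  lift c to ℕ using hc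
  induction c with
  | zero => exact h.congr fun X _ => by simp
  | succ c ih =>
    refine ih (of_add_card (hσ.add_mul_card c.cast_nonneg) (h.congr fun X _ => ?_))
    push_cast
    ring

theorem dual (hσ : IsPolymatroidOn E σ) {m : ℕ} (hm : ∀ e ∈ E, σ {e} ≤ m) (hmk : m ≤ k)
    (h : KDecomposable k E σ) : KDecomposable k E (polymatroidDual m E σ) := by
  obtain ⟨M, hM, hsum⟩ := h
  refine of_add_mul_card (hσ.dual hm) (c := k - m) (by omega)
    ⟨fun t => polymatroidDual 1 E (M t), fun t => (hM t).dual, fun X hX => ?_⟩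
  simp only [polymatroidDual, sum_add_distrib, sum_sub_distrib, sum_const, card_univ,
    Fintype.card_fin, nsmul_eq_mul, ← hsum E subset_rfl, ← hsum _ sdiff_subset]
  ring

end KDecomposable

namespace ExcludedMinorDk

theorem dual (hρ : IsPolymatroidOn E ρ) {m : ℕ} (hm : ∀ e ∈ E, ρ {e} ≤ m) (hmk : m ≤ k)
    (hem : ExcludedMinorDk k E ρ) : ExcludedMinorDk k E (polymatroidDual m E ρ) := by
  obtain ⟨hnot, hminors⟩ := hem
  refine ⟨fun h => hnot ?_, fun A B hA hB hAB hne => ?_⟩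
  · refine (h.dual (hρ.dual hm) (fun e _ => hρ.dual_singleton_le m e) hmk).congr fun X hX => ?_
    rw [polymatroidDual_polymatroidDual _ _ hρ.1 hX, sub_self, zero_mul, add_zero]
  · have hE' : E \ (A ∪ B) ⊆ E := sdiff_subset
    have hminor : KDecomposable k (E \ (A ∪ B)) (polymatroidContract ρ A) := by
      have h := hminors B A hB hA hAB.symm (union_comm A B ▸ hne)
      rwa [union_comm B A] at h
    have hsingle : ∀ e ∈ E \ (A ∪ B), polymatroidContract ρ A {e} ≤ m := fun e he =>
      (hρ.contract_singleton_le hA (hE' he)).trans (hm e (hE' he))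
    exact (hminor.dual (hρ.contract hA hE') hsingle hmk).congr fun X hX =>
      polymatroidContract_polymatroidDual m hA hAB hX

theorem add_mul_card (hρ : IsPolymatroidOn E ρ) {i j : ℕ} (hi : ∀ e ∈ E, ρ {e} ≤ i)
    (hij : i ≤ j) (hjk : j ≤ k) (hem : ExcludedMinorDk k E ρ) :
    ExcludedMinorDk k E (fun X => ρ X + ((j : ℤ) - i) * #X) := by
  obtain ⟨hnot, hminors⟩ := hem
  refine ⟨fun h => hnot (h.of_add_mul_card hρ (by omega)), fun A B hA hB hAB hne => ?_⟩
  have hE' : E \ (A ∪ B) ⊆ E := sdiff_subset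
  have hτ := hρ.contract hB hE'
  have hτi : ∀ e ∈ E \ (A ∪ B), polymatroidContract ρ B {e} ≤ i := fun e he =>
    (hρ.contract_singleton_le hB (hE' he)).trans (hi e (hE' he))
  have hτij : ∀ e ∈ E \ (A ∪ B),
      polymatroidDual i (E \ (A ∪ B)) (polymatroidContract ρ B) {e} ≤ j :=
    fun e _ => (hτ.dual_singleton_le i e).trans (by exact_mod_cast hij)
  have hdouble := ((hminors A B hA hB hAB hne).dual hτ hτi (hij.trans hjk)).dual
    (hτ.dual hτi) hτij hjk
  refine hdouble.congr fun X hX => ?_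
  have hXB : Disjoint X B := disjoint_sdiff_self_left.mono hX subset_union_right
  rw [polymatroidDual_polymatroidDual _ _ hτ.1 hX]
  simp only [polymatroidContract, card_union_of_disjoint hXB]
  push_cast
  ring

end ExcludedMinorDk

end

theorem stmt13_general [DecidableEq α] (E : Finset α) (i j k : ℕ)
    (hij : i ≤ j) (hjk : j ≤ k)
    (ρ : Finset α → ℤ)
    (hρ : IsPolymatroidOn E ρ) (hpi : ∀ e ∈ E, ρ {e} ≤ (i : ℤ))
    (hem : ExcludedMinorDk k E ρ) :
    ExcludedMinorDk k E (fun X => (j : ℤ) * X.card - ρ E + ρ (E \ X)) ∧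
    ExcludedMinorDk k E (fun X => ρ X + ((j : ℤ) - (i : ℤ)) * X.card) :=
  ⟨hem.dual hρ (fun e he => (hpi e he).trans (by exact_mod_cast hij)) hjk,
    hem.add_mul_card hρ hpi hij hjk⟩

theorem stmt13 [DecidableEq α] (E : Finset α) (i j k : ℕ)
    (hi : 0 < i) (hij : i ≤ j) (hjk : j ≤ k)
    (ρ : Finset α → ℤ)
    (hρ : IsPolymatroidOn E ρ) (hpi : ∀ e ∈ E, ρ {e} ≤ (i : ℤ))
    (hem : ExcludedMinorDk k E ρ) :
    ExcludedMinorDk k E (fun X => (j : ℤ) * X.card - ρ E + ρ (E \ X)) ∧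
    ExcludedMinorDk k E (fun X => ρ X + ((j : ℤ) - (i : ℤ)) * X.card) :=
  stmt13_general E i j k hij hjk ρ hρ hpi hem
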